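/- The TILES set is an unextendable product basis: there is no nonzero product vector a ⊗ b ∈ ℂ³ ⊗ ℂ³ orthogonal to all five TILES vectors ψ₀,…,ψ₄. -/

import Mathlib

open Matrix ComplexOrder

/-- Standard basis vector `|i⟩` of `ℂ³`. -/
noncomputable def e (i : Fin 3) : Fin 3 → ℂ := Pi.single i 1

/-- Tensor product of two vectors of `ℂ³`, as a vector of `ℂ³ ⊗ ℂ³ ≅ ℂ⁹`. -/
def tens (a b : Fin 3 → ℂ) : Fin 3 × Fin 3 → ℂ := fun p => a p.1 * b p.2

/-- The five TILES vectors in `ℂ³ ⊗ ℂ³`. -/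
noncomputable def tiles : Fin 5 → (Fin 3 × Fin 3 → ℂ)
  | 0 => (1 / Real.sqrt 2 : ℝ) • tens (e 0) (e 0 - e 1)
  | 1 => (1 / Real.sqrt 2 : ℝ) • tens (e 0 - e 1) (e 2)
  | 2 => (1 / Real.sqrt 2 : ℝ) • tens (e 2) (e 1 - e 2)
  | 3 => (1 / Real.sqrt 2 : ℝ) • tens (e 1 - e 2) (e 0)
  | 4 => (1 / 3 : ℝ) • tens (e 0 + e 1 + e 2) (e 0 + e 1 + e 2)

/-!
Write `ψᵢ = cᵢ • uᵢ ⊗ vᵢ` with `cᵢ ≠ 0`. Then `a ⊗ b ⊥ ψᵢ` means `a ⊥ uᵢ` or `b ⊥ vᵢ`, so by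
pigeonhole `a` is orthogonal to three of the `uᵢ` or `b` to three of the `vᵢ`. Any three of the
`uᵢ`, and any three of the `vᵢ`, form a basis of `ℂ³` (a finite determinant check), hence
`a = 0` or `b = 0`.
-/

open Finset

theorem Finset.le_card_filter_or_le_card_filter {ι : Type*} [Fintype ι] {p q : ι → Prop}
    [DecidablePred p] [DecidablePred q] {m : ℕ} (hpq : ∀ i, p i ∨ q i)
    (hm : 2 * m ≤ Fintype.card ι + 1) :
    m ≤ #{i | p i} ∨ m ≤ #{i | q i} := by
  classical
  have hunion := card_union_le {i | p i} {i | q i}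
  rw [← filter_or, filter_true_of_mem fun i _ => hpq i, card_univ] at hunion
  omega

theorem Matrix.eq_zero_of_card_le_of_dotProduct_eq_zero {ι n K : Type*} [Fintype n]
    [DecidableEq n] [Field K] {u : ι → n → K}
    (hu : ∀ f : n → ι, Function.Injective f → (Matrix.of fun r => u (f r)).det ≠ 0)
    {s : Finset ι} (hs : Fintype.card n ≤ #s) {x : n → K} (hx : ∀ i ∈ s, u i ⬝ᵥ x = 0) :
    x = 0 := by
  obtain ⟨f⟩ := Function.Embedding.nonempty_of_card_le (β := s) (by simpa using hs)
  refine eq_zero_of_mulVec_eq_zero (hu _ (Subtype.val_injective.comp f.injective)) ?_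
  ext r
  exact hx _ (f r).2

theorem star_tens (a b : Fin 3 → ℂ) : star (tens a b) = tens (star a) (star b) := by
  ext p
  exact star_mul' _ _

theorem tens_dotProduct_tens (c d a b : Fin 3 → ℂ) :
    tens c d ⬝ᵥ tens a b = (c ⬝ᵥ a) * (d ⬝ᵥ b) := by
  simp only [dotProduct, tens, Fintype.sum_prod_type, sum_mul_sum]
  exact sum_congr rfl fun i _ => sum_congr rfl fun j _ => by ring

noncomputable def tilesCoeff : Fin 5 → ℝ := ![1 / √2, 1 / √2, 1 / √2, 1 / √2, 1 / 3]

noncomputable def tilesLeft : Fin 5 → Fin 3 → ℂ :=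
  ![e 0, e 0 - e 1, e 2, e 1 - e 2, e 0 + e 1 + e 2]

noncomputable def tilesRight : Fin 5 → Fin 3 → ℂ :=
  ![e 0 - e 1, e 2, e 1 - e 2, e 0, e 0 + e 1 + e 2]

theorem tiles_eq_smul_tens (i : Fin 5) :
    tiles i = tilesCoeff i • tens (tilesLeft i) (tilesRight i) := by
  fin_cases i <;> rfl

theorem tilesCoeff_ne_zero (i : Fin 5) : tilesCoeff i ≠ 0 := by
  fin_cases i <;> simp [tilesCoeff]

theorem star_tiles_dotProduct_tens (i : Fin 5) (a b : Fin 3 → ℂ) :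
    star (tiles i) ⬝ᵥ tens a b =
      tilesCoeff i • ((star (tilesLeft i) ⬝ᵥ a) * (star (tilesRight i) ⬝ᵥ b)) := by
  rw [tiles_eq_smul_tens, star_smul, star_trivial, smul_dotProduct, star_tens,
    tens_dotProduct_tens]

theorem det_star_tiles_ne_zero (f : Fin 3 → Fin 5) (hf : Function.Injective f) :
    (Matrix.of fun r => star (tilesLeft (f r))).det ≠ 0 ∧
      (Matrix.of fun r => star (tilesRight (f r))).det ≠ 0 := by
  have h01 : f 0 ≠ f 1 := hf.ne (by decide)
  have h02 : f 0 ≠ f 2 := hf.ne (by decide)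
  have h12 : f 1 ≠ f 2 := hf.ne (by decide)
  simp only [det_fin_three, of_apply]
  generalize f 0 = i, f 1 = j, f 2 = k at *
  fin_cases i <;> fin_cases j <;> fin_cases k <;> simp_all [tilesLeft, tilesRight, e] <;> norm_num

/-- The TILES set is an unextendable product basis: no nonzero product vector is
orthogonal to all five TILES vectors. -/
theorem tiles_unextendable :
    ¬ ∃ a b : Fin 3 → ℂ, a ≠ 0 ∧ b ≠ 0 ∧
      ∀ i : Fin 5,
        (∑ p : Fin 3 × Fin 3, (starRingEnd ℂ) (tiles i p) * (a p.1 * b p.2)) = 0 := by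
  rintro ⟨a, b, ha, hb, horth⟩
  have hfactor (i : Fin 5) :
      star (tilesLeft i) ⬝ᵥ a = 0 ∨ star (tilesRight i) ⬝ᵥ b = 0 := by
    have hi : star (tiles i) ⬝ᵥ tens a b = 0 := horth i
    rwa [star_tiles_dotProduct_tens, smul_eq_zero, or_iff_right (tilesCoeff_ne_zero i),
      mul_eq_zero] at hi
  obtain hleft | hright := le_card_filter_or_le_card_filter (m := Fintype.card (Fin 3)) hfactor
    (by simp)
  · refine ha (eq_zero_of_card_le_of_dotProduct_eq_zero (u := fun i => star (tilesLeft i))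
      (fun f hf => ?_) hleft fun i hi => ?_)
    exacts [(det_star_tiles_ne_zero f hf).1, (mem_filter.mp hi).2]
  · refine hb (eq_zero_of_card_le_of_dotProduct_eq_zero (u := fun i => star (tilesRight i))
      (fun f hf => ?_) hright fun i hi => ?_)
    exacts [(det_star_tiles_ne_zero f hf).2, (mem_filter.mp hi).2]
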